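/- With notation as above, the sine of the interior angle θᵢ of the triangle conv(u₁,u₂,u₃) at vertex uᵢ satisfies sin θᵢ = rᵢ/(δⱼ δ_k), where {i,j,k} = {1,2,3}. -/

import Mathlib

/-!
Let `Pᵢ = (pᵢ, qᵢ, rᵢ)` be the rows of `M`. The side vector `uⱼ - uᵢ` is `(rᵢ rⱼ)⁻¹` times the first
two coordinates of `Pᵢ × Pⱼ` turned by a right angle, and the `2 × 2` determinant of the two sides
at `uᵢ` is `det [Pᵢ, Pⱼ, P_k] / (rᵢ rⱼ r_k)`. The rows of `(M⁻¹)ᵀ` are the cross products of the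
other two rows of `M` divided by `± det M`, so `sin θᵢ = |det (uⱼ - uᵢ, u_k - uᵢ)| / (‖uⱼ - uᵢ‖ ‖u_k - uᵢ‖)`
becomes `rᵢ / (δⱼ δ_k)` once `det M = 1`.
-/

open Real Matrix EuclideanGeometry

noncomputable def dehomogenize (P : Fin 3 → ℝ) : EuclideanSpace ℝ (Fin 2) :=
  WithLp.toLp 2 ![P 0 / P 2, P 1 / P 2]

/-- For a row `(a, b, c)` of `L` this is `δ`, the length of the normal `(a, b)` of the line
`a x + b y + c = 0`. -/
noncomputable def xyNorm (v : Fin 3 → ℝ) : ℝ := √(v 0 ^ 2 + v 1 ^ 2)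

theorem xyNorm_smul (c : ℝ) (v : Fin 3 → ℝ) : xyNorm (c • v) = |c| * xyNorm v := by
  rw [xyNorm, xyNorm, ← sqrt_sq_eq_abs, ← sqrt_mul (sq_nonneg c)]
  simp only [Pi.smul_apply, smul_eq_mul]
  ring_nf

theorem sin_angle_mul_norm_mul_norm_eq_abs_det (v w : EuclideanSpace ℝ (Fin 2)) :
    sin (InnerProductGeometry.angle v w) * (‖v‖ * ‖w‖) = |v 0 * w 1 - v 1 * w 0| := by
  rw [InnerProductGeometry.sin_angle_mul_norm_mul_norm, ← sqrt_sq_eq_abs]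
  congr 1
  simp only [EuclideanSpace.inner_eq_star_dotProduct, dotProduct, Fin.sum_univ_two, star_trivial]
  ring

theorem norm_dehomogenize_sub {P Q : Fin 3 → ℝ} (hP : P 2 ≠ 0) (hQ : Q 2 ≠ 0) :
    ‖dehomogenize Q - dehomogenize P‖ = xyNorm (P ⨯₃ Q) / |P 2 * Q 2| := by
  rw [EuclideanSpace.norm_eq, xyNorm, ← sqrt_sq_eq_abs, ← sqrt_div' _ (sq_nonneg _)]
  congr 1
  simp only [dehomogenize, PiLp.sub_apply, norm_eq_abs, sq_abs, Fin.sum_univ_two, cons_val_zero,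
    cons_val_one, cons_val_fin_one, crossProduct, Nat.succ_eq_add_one, Nat.reduceAdd,
    LinearMap.mk₂_apply]
  field_simp
  ring

theorem det_dehomogenize_sub {P Q R : Fin 3 → ℝ} (hP : P 2 ≠ 0) (hQ : Q 2 ≠ 0) (hR : R 2 ≠ 0) :
    (dehomogenize Q - dehomogenize P) 0 * (dehomogenize R - dehomogenize P) 1 -
      (dehomogenize Q - dehomogenize P) 1 * (dehomogenize R - dehomogenize P) 0 =
      det ![P, Q, R] / (P 2 * Q 2 * R 2) := by
  rw [← triple_product_eq_det]
  simp only [dehomogenize, PiLp.sub_apply, cons_val_zero, cons_val_one, cons_val_fin_one,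
    dotProduct, crossProduct, Nat.succ_eq_add_one, Nat.reduceAdd, LinearMap.mk₂_apply,
    Fin.sum_univ_three, cons_val]
  field_simp
  ring

theorem sin_angle_dehomogenize_mul_xyNorm {P Q R : Fin 3 → ℝ} (hP : P 2 ≠ 0) (hQ : Q 2 ≠ 0)
    (hR : R 2 ≠ 0) :
    sin (∠ (dehomogenize Q) (dehomogenize P) (dehomogenize R)) *
      (xyNorm (P ⨯₃ Q) * xyNorm (P ⨯₃ R)) = |P 2| * |det ![P, Q, R]| := by
  have h := sin_angle_mul_norm_mul_norm_eq_abs_det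
    (dehomogenize Q - dehomogenize P) (dehomogenize R - dehomogenize P)
  rw [norm_dehomogenize_sub hP hQ, norm_dehomogenize_sub hP hR, det_dehomogenize_sub hP hQ hR,
    abs_div, abs_mul, abs_mul, abs_mul, abs_mul] at h
  rw [angle, vsub_eq_sub, vsub_eq_sub]
  field_simp at h
  linear_combination h

/-- `M` maps both sides to `det [Mᵢ, Mⱼ, M_k]` times the `k`-th basis vector. -/
theorem cross_eq_det_smul_inv_transpose {K : Type*} [Field K] {M : Matrix (Fin 3) (Fin 3) K}
    (hM : M.det ≠ 0) {i j k : Fin 3} (hij : i ≠ j) (hjk : j ≠ k) (hki : k ≠ i) :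
    M i ⨯₃ M j = det ![M i, M j, M k] • (M⁻¹)ᵀ k := by
  apply mulVec_injective_of_det_ne_zero hM
  have hinv : M *ᵥ (M⁻¹)ᵀ k = Pi.single k 1 := by
    ext m
    simp [mulVec, dotProduct, ← mul_apply, mul_nonsing_inv M (Ne.isUnit hM), one_apply,
      Pi.single_apply]
  rw [mulVec_smul, hinv]
  ext m
  change M m ⬝ᵥ M i ⨯₃ M j = _
  obtain rfl | rfl | rfl : m = i ∨ m = j ∨ m = k := by
    simp only [ne_eq, Fin.ext_iff] at *; omega
  · simp [dot_self_cross, hki.symm]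
  · simp [dot_cross_self, hjk]
  · rw [triple_product_permutation, triple_product_eq_det]
    simp

theorem abs_det_rows_eq {R : Type*} [CommRing R] [LinearOrder R] [IsStrictOrderedRing R]
    {M : Matrix (Fin 3) (Fin 3) R} {i j k : Fin 3}
    (hij : i ≠ j) (hjk : j ≠ k) (hki : k ≠ i) : |det ![M i, M j, M k]| = |M.det| := by
  have hinj : Function.Injective ![i, j, k] := by
    intro a b hab
    fin_cases a <;> fin_cases b <;> simp_all [eq_comm]
  let σ : Equiv.Perm (Fin 3) := Equiv.ofBijective _ (Finite.injective_iff_bijective.mp hinj)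
  have hσ : ![M i, M j, M k] = M.submatrix σ id := by
    ext a b; fin_cases a <;> rfl
  rw [hσ, det_permute, abs_mul, ← Int.cast_abs, Equiv.Perm.sign_abs, Int.cast_one, one_mul]

theorem xyNorm_cross_rows {M : Matrix (Fin 3) (Fin 3) ℝ} (hM : M.det ≠ 0) {i j k : Fin 3}
    (hij : i ≠ j) (hjk : j ≠ k) (hki : k ≠ i) :
    xyNorm (M i ⨯₃ M j) = |M.det| * xyNorm ((M⁻¹)ᵀ k) := by
  rw [cross_eq_det_smul_inv_transpose hM hij hjk hki, xyNorm_smul, abs_det_rows_eq hij hjk hki]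

/-- The sine of the interior angle of the triangle at vertex `uᵢ` is `rᵢ/(δⱼ δ_k)`. -/
theorem stmt5 (M : Matrix (Fin 3) (Fin 3) ℤ)
    (hr : ∀ i, 0 < M i 2) (hdet : M.det = 1)
    (u : Fin 3 → EuclideanSpace ℝ (Fin 2))
    (hu : ∀ i, u i = ![(M i 0 : ℝ) / (M i 2 : ℝ), (M i 1 : ℝ) / (M i 2 : ℝ)])
    (L : Matrix (Fin 3) (Fin 3) ℝ)
    (hL : L = ((M.map (Int.cast : ℤ → ℝ))⁻¹).transpose)
    (δ : Fin 3 → ℝ)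
    (hδ : ∀ i, δ i = Real.sqrt ((L i 0) ^ 2 + (L i 1) ^ 2)) :
    ∀ i j k : Fin 3, i ≠ j → j ≠ k → k ≠ i →
      Real.sin (EuclideanGeometry.angle (u j) (u i) (u k)) =
        (M i 2 : ℝ) / (δ j * δ k) := by
  intro i j k hij hjk hki
  set A := M.map (Int.cast : ℤ → ℝ)
  have hA : A.det = 1 := by rw [← Int.cast_det, hdet, Int.cast_one]
  have hA0 : A.det ≠ 0 := hA ▸ one_ne_zero
  have hr' : ∀ i, (0 : ℝ) < A i 2 := fun i => Int.cast_pos.mpr (hr i)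
  have hu' : ∀ i, u i = dehomogenize (A i) := fun i => WithLp.ofLp_injective 2 (hu i)
  have hδ' : ∀ i, δ i = xyNorm (L i) := hδ
  have hsin := sin_angle_dehomogenize_mul_xyNorm (hr' i).ne' (hr' j).ne' (hr' k).ne'
  rw [xyNorm_cross_rows hA0 hij hjk hki, xyNorm_cross_rows hA0 hki.symm hjk.symm hij.symm,
    abs_det_rows_eq hij hjk hki, hA, abs_one, one_mul, one_mul, abs_of_pos (hr' i), mul_one,
    ← hL, ← hδ', ← hδ', ← hu', ← hu', ← hu', mul_comm (δ k)] at hsin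
  exact eq_div_of_mul_eq (right_ne_zero_of_mul (hsin ▸ (hr' i).ne')) hsin
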